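/- In the continuous-time Example-4 game, the pure stationary strategy pair (p,q) = (1,0) (player 1 plays its first action and player 2 plays its second action at state 1) is an α-Nash equilibrium for every α ∈ (0, 1/2]; hence it is a Blackwell–Nash equilibrium. -/
import Mathlib


open Matrix Set

noncomputable section

/-- Transition rate matrix of the continuous-time Example-4 game. -/
def ex4Q (p q : ℝ) : Matrix (Fin 2) (Fin 2) ℝ :=
  !![-(p*(1-q) + (1-p)*q), p*(1-q) + (1-p)*q; 0, 0]

/-- Expected reward-rate vector of player 1 in the Example-4 game. -/
def ex4r1 (p q : ℝ) : Fin 2 → ℝ :=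
  ![5*p*q + 2*p*(1-q) + 3*(1-p)*q + 4*(1-p)*(1-q), 5]

/-- Expected reward-rate vector of player 2 in the Example-4 game. -/
def ex4r2 (p q : ℝ) : Fin 2 → ℝ :=
  ![3*p*q + 3*p*(1-q) + 4*(1-p)*q + 2*(1-p)*(1-q), 4]

/-- α-discounted value vector of player 1. -/
def ex4v1 (α p q : ℝ) : Fin 2 → ℝ :=
  (α • (1 : Matrix (Fin 2) (Fin 2) ℝ) - ex4Q p q)⁻¹.mulVec (ex4r1 p q)

/-- α-discounted value vector of player 2. -/
def ex4v2 (α p q : ℝ) : Fin 2 → ℝ :=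
  (α • (1 : Matrix (Fin 2) (Fin 2) ℝ) - ex4Q p q)⁻¹.mulVec (ex4r2 p q)

/-- `(p,q)` is an α-Nash equilibrium of the Example-4 game. -/
def ex4IsNash (α p q : ℝ) : Prop :=
  p ∈ Icc (0:ℝ) 1 ∧ q ∈ Icc (0:ℝ) 1 ∧
  (∀ p' ∈ Icc (0:ℝ) 1, ∀ s, ex4v1 α p' q s ≤ ex4v1 α p q s) ∧
  (∀ q' ∈ Icc (0:ℝ) 1, ∀ s, ex4v2 α p q' s ≤ ex4v2 α p q s)

lemma inv_upper (a b d : ℝ) (ha : a ≠ 0) (hd : d ≠ 0) :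
    (!![a, b; 0, d] : Matrix (Fin 2) (Fin 2) ℝ)⁻¹ = !![1/a, -b/(a*d); 0, 1/d] := by
  apply inv_eq_right_inv
  ext i j
  fin_cases i <;> fin_cases j <;>
    simp [Matrix.mul_apply, Fin.sum_univ_two] <;> field_simp <;> ring

lemma mat_eq (α ρ : ℝ) :
    α • (1 : Matrix (Fin 2) (Fin 2) ℝ) - !![-ρ, ρ; 0, 0] = !![α + ρ, -ρ; 0, α] := by
  ext i j
  fin_cases i <;> fin_cases j <;> simp [Matrix.one_apply] <;> ring

lemma v1_eq (α p' : ℝ) (hα : 0 < α) (hp : 0 ≤ p') :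
    ex4v1 α p' 0 = ![(α*(4-2*p') + 5*p')/(α*(α+p')), 5/α] := by
  have h1 : (α + p') ≠ 0 := by positivity
  have h2 : α ≠ 0 := ne_of_gt hα
  unfold ex4v1 ex4Q ex4r1
  have hQ : (!![-(p'*(1-0) + (1-p')*0), p'*(1-0) + (1-p')*0; 0, 0] : Matrix (Fin 2) (Fin 2) ℝ)
      = !![-p', p'; 0, 0] := by norm_num
  rw [hQ, mat_eq, inv_upper _ _ _ h1 h2]
  ext i
  fin_cases i <;>
    simp [Matrix.mulVec, dotProduct, Fin.sum_univ_two] <;> field_simp <;> ring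

lemma v2_eq (α q' : ℝ) (hα : 0 < α) (hq : q' ≤ 1) :
    ex4v2 α 1 q' = ![(3*α + 4*(1-q'))/(α*(α+(1-q'))), 4/α] := by
  have h1 : (α + (1-q')) ≠ 0 := by nlinarith
  have h2 : α ≠ 0 := ne_of_gt hα
  unfold ex4v2 ex4Q ex4r2
  have hQ : (!![-(1*(1-q') + (1-1)*q'), 1*(1-q') + (1-1)*q'; 0, 0] : Matrix (Fin 2) (Fin 2) ℝ)
      = !![-(1-q'), 1-q'; 0, 0] := by norm_num
  rw [hQ, mat_eq, inv_upper _ _ _ h1 h2]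
  ext i
  fin_cases i <;>
    simp [Matrix.mulVec, dotProduct, Fin.sum_univ_two] <;> field_simp <;> ring

/-- In the continuous-time Example-4 game the pure pair `(1,0)` is an α-Nash
equilibrium for every `α ∈ (0, 1/2]`; hence it is a Blackwell–Nash equilibrium. -/
theorem ex4_BNE : ∀ α ∈ Ioc (0:ℝ) (1/2), ex4IsNash α 1 0 := by
  rintro α ⟨hα, hα2⟩
  refine ⟨⟨zero_le_one, le_refl 1⟩, ⟨le_refl 0, zero_le_one⟩, ?_, ?_⟩
  · rintro p' ⟨hp0, hp1⟩ s
    rw [v1_eq α p' hα hp0, v1_eq α 1 hα zero_le_one]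
    fin_cases s
    · show (α*(4-2*p') + 5*p')/(α*(α+p')) ≤ (α*(4-2*1) + 5*1)/(α*(α+1))
      rw [div_le_div_iff₀ (by positivity) (by positivity)]
      nlinarith [mul_nonneg (mul_nonneg hα.le (sub_nonneg.2 hα2)) (sub_nonneg.2 hp1),
        sq_nonneg α]
    · simp
  · rintro q' ⟨hq0, hq1⟩ s
    rw [v2_eq α q' hα hq1, v2_eq α 0 hα zero_le_one]
    fin_cases s
    · show (3*α + 4*(1-q'))/(α*(α+(1-q'))) ≤ (3*α + 4*(1-0))/(α*(α+(1-0)))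
      rw [div_le_div_iff₀ (by nlinarith) (by positivity)]
      nlinarith [mul_nonneg hα.le hq0]
    · simp

end
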